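/- Let n ≥ 1, k > 0, c > 0, δ > 0, a > 0, let H be a symmetric positive definite real n×n matrix, θ* ∈ ℝⁿ, J* ∈ ℝ, h₀ ∈ ℝ with h₀ ≠ 0, and let h₁ ∈ ℝⁿ be nonzero. Define max_δ(x) := (x + √(x² + δ))/2, J(θ) := J* + (1/2)(θ − θ*)ᵀH(θ − θ*), h(θ) := h₀ + h₁ᵀ(θ − θ*), d := (c/(k‖h₁‖²)) h₁ᵀH⁻¹h₁ and c₁ := (|h₀|/(2 h₁ᵀH⁻¹h₁))(−sgn(h₀) + √(1 + δ d/(c² h₀²))). Then the system of equations in (θ̃, G_J, η_J, G_h, η_h, γ) ∈ ℝⁿ×ℝⁿ×ℝ×ℝⁿ×ℝ×ℝ with γ > 0: k G_J = γ max_δ(k G_JᵀG_h − c η_h) G_h, G_J = H θ̃, η_J = J(θ̃ + θ*) + (a²/4)Tr(H), G_h = h₁, η_h = h(θ̃ + θ*), γ ‖G_h‖² = 1, has the unique solution θ̃ = c₁ H⁻¹h₁, G_J = c₁ h₁, η_J = J* + (a²/4)Tr(H) + (h₀²/(8 h₁ᵀH⁻¹h₁))(−sgn(h₀) + √(1 +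 δ d/(c² h₀²)))², G_h = h₁, η_h = (|h₀|/2)(sgn(h₀) + √(1 + δ d/(c² h₀²))), γ = 1/‖h₁‖². -/

import Mathlib

noncomputable section
open Matrix

/-- The smooth max approximation `max_δ(x) = (x + √(x² + δ))/2`. -/
def maxDelta (δ x : ℝ) : ℝ := (x + Real.sqrt (x ^ 2 + δ)) / 2

lemma maxDelta_pos {δ : ℝ} (hδ : 0 < δ) (x : ℝ) : 0 < maxDelta δ x := by
  unfold maxDelta
  have h1 : |x| < Real.sqrt (x ^ 2 + δ) := by
    have := Real.sqrt_lt_sqrt (sq_nonneg x) (by linarith : x ^ 2 < x ^ 2 + δ)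
    rwa [Real.sqrt_sq_eq_abs] at this
  have := neg_abs_le x
  linarith

lemma maxDelta_eq_iff {δ m : ℝ} (hδ : 0 < δ) (hm : 0 < m) (x : ℝ) :
    maxDelta δ x = m ↔ δ = 4 * m * (m - x) := by
  unfold maxDelta
  constructor
  · intro h
    have hs : Real.sqrt (x ^ 2 + δ) = 2 * m - x := by linarith
    have hnn : (0:ℝ) ≤ x ^ 2 + δ := by positivity
    have := Real.sq_sqrt hnn
    rw [hs] at this
    nlinarith
  · intro h
    have hmx : 0 < m - x := by nlinarith
    have hs : Real.sqrt (x ^ 2 + δ) = 2 * m - x := by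
      rw [show x ^ 2 + δ = (2 * m - x) ^ 2 by nlinarith]
      exact Real.sqrt_sq (by linarith)
    rw [hs]; ring

/-- The quadratic objective `J(θ) = J* + ½(θ−θ*)ᵀH(θ−θ*)`. -/
def Jfun (n : ℕ) (H : Matrix (Fin n) (Fin n) ℝ) (θs : Fin n → ℝ) (Js : ℝ)
    (θ : Fin n → ℝ) : ℝ :=
  Js + (1 / 2) * ((θ - θs) ⬝ᵥ (H *ᵥ (θ - θs)))

/-- The linear barrier `h(θ) = h₀ + h₁ᵀ(θ−θ*)`. -/
def hfun (n : ℕ) (h₀ : ℝ) (h₁ : Fin n → ℝ) (θs : Fin n → ℝ) (θ : Fin n → ℝ) : ℝ :=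
  h₀ + h₁ ⬝ᵥ (θ - θs)

/-- `h₁ᵀH⁻¹h₁`. -/
def qval (n : ℕ) (H : Matrix (Fin n) (Fin n) ℝ) (h₁ : Fin n → ℝ) : ℝ :=
  h₁ ⬝ᵥ (H⁻¹ *ᵥ h₁)

/-- `d = (c/(k‖h₁‖²)) h₁ᵀH⁻¹h₁`. -/
def dval (n : ℕ) (k c : ℝ) (H : Matrix (Fin n) (Fin n) ℝ) (h₁ : Fin n → ℝ) : ℝ :=
  c / (k * (h₁ ⬝ᵥ h₁)) * qval n H h₁

/-- `√(1 + δd/(c²h₀²))`. -/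
def sval (n : ℕ) (k c δ h₀ : ℝ) (H : Matrix (Fin n) (Fin n) ℝ) (h₁ : Fin n → ℝ) : ℝ :=
  Real.sqrt (1 + δ * dval n k c H h₁ / (c ^ 2 * h₀ ^ 2))

/-- `c₁ = (|h₀|/(2h₁ᵀH⁻¹h₁))(−sgn(h₀) + √(1 + δd/(c²h₀²)))`. -/
def c1val (n : ℕ) (k c δ h₀ : ℝ) (H : Matrix (Fin n) (Fin n) ℝ) (h₁ : Fin n → ℝ) : ℝ :=
  |h₀| / (2 * qval n H h₁) * (-(Real.sign h₀) + sval n k c δ h₀ H h₁)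

lemma sign_mul_abs' {h₀ : ℝ} (h : h₀ ≠ 0) : Real.sign h₀ * |h₀| = h₀ := by
  rcases h.lt_or_gt with h'|h'
  · rw [Real.sign_of_neg h', abs_of_neg h']; ring
  · rw [Real.sign_of_pos h', abs_of_pos h']; ring

/-- The equilibrium equations of the averaged ASfES system have the unique solution
`θ̃ = c₁H⁻¹h₁`, `G_J = c₁h₁`, `η_J = J* + (a²/4)Tr(H) + (h₀²/(8h₁ᵀH⁻¹h₁))(−sgn h₀ + √·)²`,
`G_h = h₁`, `η_h = (|h₀|/2)(sgn h₀ + √·)`, `γ = 1/‖h₁‖²`. -/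
theorem stmt15 (n : ℕ) (hn : 1 ≤ n) (k c δ a : ℝ)
    (hk : 0 < k) (hc : 0 < c) (hδ : 0 < δ) (ha : 0 < a)
    (H : Matrix (Fin n) (Fin n) ℝ) (hH : H.PosDef)
    (θs : Fin n → ℝ) (Js h₀ : ℝ) (hh₀ : h₀ ≠ 0) (h₁ : Fin n → ℝ) (hh₁ : h₁ ≠ 0) :
    ∀ (θt GJ : Fin n → ℝ) (ηJ : ℝ) (Gh : Fin n → ℝ) (ηh γ : ℝ),
      (0 < γ ∧
        k • GJ = (γ * maxDelta δ (k * (GJ ⬝ᵥ Gh) - c * ηh)) • Gh ∧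
        GJ = H *ᵥ θt ∧
        ηJ = Jfun n H θs Js (θt + θs) + a ^ 2 / 4 * H.trace ∧
        Gh = h₁ ∧
        ηh = hfun n h₀ h₁ θs (θt + θs) ∧
        γ * (Gh ⬝ᵥ Gh) = 1)
      ↔
      (θt = c1val n k c δ h₀ H h₁ • (H⁻¹ *ᵥ h₁) ∧
        GJ = c1val n k c δ h₀ H h₁ • h₁ ∧
        ηJ = Js + a ^ 2 / 4 * H.trace +
          h₀ ^ 2 / (8 * qval n H h₁) *
            (-(Real.sign h₀) + sval n k c δ h₀ H h₁) ^ 2 ∧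
        Gh = h₁ ∧
        ηh = |h₀| / 2 * (Real.sign h₀ + sval n k c δ h₀ H h₁) ∧
        γ = (h₁ ⬝ᵥ h₁)⁻¹) := by
  intro θt GJ ηJ Gh ηh γ
  have hN : 0 < h₁ ⬝ᵥ h₁ := by
    have := (Matrix.dotProduct_self_star_pos_iff (v := h₁)).mpr hh₁
    simpa using this
  have hQ0 : 0 < qval n H h₁ := by
    have := hH.inv.dotProduct_mulVec_pos hh₁
    simpa [qval] using this
  set N : ℝ := h₁ ⬝ᵥ h₁ with hNdef
  set q : ℝ := qval n H h₁ with hqdef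
  clear_value N q
  have hQ : 0 < q := hqdef ▸ hQ0
  have hqd : h₁ ⬝ᵥ (H⁻¹ *ᵥ h₁) = q := by rw [hqdef, qval]
  set S : ℝ := Real.sqrt (h₀ ^ 2 + δ * q / (k * c * N)) with hSdef
  clear_value S
  have hposadd : 0 < δ * q / (k * c * N) := by positivity
  have hSabs : |h₀| < S := by
    rw [hSdef, ← Real.sqrt_sq_eq_abs]
    exact Real.sqrt_lt_sqrt (sq_nonneg h₀) (by linarith)
  have hSpos : 0 < S := lt_of_le_of_lt (abs_nonneg h₀) hSabs
  have hSsq : S ^ 2 = h₀ ^ 2 + δ * q / (k * c * N) := by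
    rw [hSdef]; exact Real.sq_sqrt (by positivity)
  have habs_sval : |h₀| * sval n k c δ h₀ H h₁ = S := by
    rw [sval, ← Real.sqrt_sq_eq_abs, ← Real.sqrt_mul (sq_nonneg h₀), hSdef]
    congr 1
    rw [dval, ← hqdef, ← hNdef]
    field_simp
  set c1 : ℝ := c1val n k c δ h₀ H h₁ with hc1def
  clear_value c1
  have hc1eq : c1 = (-h₀ + S) / (2 * q) := by
    calc c1 = (-(Real.sign h₀ * |h₀|) + |h₀| * sval n k c δ h₀ H h₁) / (2 * q) := by
          rw [hc1def, c1val, ← hqdef]; ring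
    _ = (-h₀ + S) / (2 * q) := by rw [sign_mul_abs' hh₀, habs_sval]
  have hc1pos : 0 < c1 := by
    rw [hc1eq]
    apply div_pos
    · have := le_abs_self h₀; linarith
    · linarith
  have hc1quad : q * c1 ^ 2 + h₀ * c1 = δ / (4 * k * c * N) := by
    have h := hSsq
    field_simp at h
    rw [hc1eq, eq_div_iff (by positivity : (4:ℝ) * k * c * N ≠ 0)]
    field_simp
    linear_combination 4 * h
  have huniq : ∀ t : ℝ, 0 < t → q * t ^ 2 + h₀ * t = δ / (4 * k * c * N) → t = c1 := by
    intro t ht hteq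
    have key : (t - c1) * (q * (t + c1) + h₀) = 0 := by
      linear_combination hteq - hc1quad
    rcases mul_eq_zero.mp key with h | h
    · linarith
    · exfalso
      have hE : 0 < δ / (4 * k * c * N) := by positivity
      have h8 : q * t ^ 2 + h₀ * t = -(q * c1 * t) := by linear_combination t * h
      have h9 : 0 < q * c1 * t := by positivity
      linarith
  have hdet : IsUnit H.det := isUnit_iff_ne_zero.mpr hH.det_pos.ne'
  have hHinvH : H⁻¹ * H = 1 := Matrix.nonsing_inv_mul H hdet
  have hHHinv : H * H⁻¹ = 1 := Matrix.mul_nonsing_inv H hdet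
  have hcan : (θt + θs) - θs = θt := by simp
  have hηh_rhs : |h₀| / 2 * (Real.sign h₀ + sval n k c δ h₀ H h₁) = h₀ + c1 * q := by
    have h1 := sign_mul_abs' hh₀
    have h2 := habs_sval
    rw [hc1eq]
    field_simp
    linear_combination h1 + h2
  constructor
  · rintro ⟨hγ, heq, hGJ, hηJ, hGh, hηh, hγN⟩
    rw [hGh] at heq hγN
    set M : ℝ := maxDelta δ (k * (GJ ⬝ᵥ h₁) - c * ηh) with hM
    clear_value M
    have hMpos : 0 < M := by rw [hM]; exact maxDelta_pos hδ _
    set t : ℝ := γ * M / k with ht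
    clear_value t
    have htpos : 0 < t := by rw [ht]; positivity
    have hGJ' : GJ = t • h₁ := by
      have h2 : k⁻¹ • (k • GJ) = k⁻¹ • ((γ * M) • h₁) := by rw [heq]
      rwa [inv_smul_smul₀ hk.ne', smul_smul, inv_mul_eq_div, ← ht] at h2
    have hθt : θt = t • (H⁻¹ *ᵥ h₁) := by
      have h3 : H⁻¹ *ᵥ GJ = θt := by
        rw [hGJ, mulVec_mulVec, hHinvH, one_mulVec]
      rw [← h3, hGJ', mulVec_smul]
    have hdot : GJ ⬝ᵥ h₁ = t * N := by
      rw [hGJ', smul_dotProduct, smul_eq_mul, hNdef]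
    have hηh' : ηh = h₀ + t * q := by
      rw [hηh, hfun, hcan, hθt, dotProduct_smul, smul_eq_mul, hqd]
    have hγval : γ = N⁻¹ := by
      have h4 : γ = (γ * N) * N⁻¹ := by
        rw [mul_assoc, mul_inv_cancel₀ hN.ne', mul_one]
      rw [← hNdef] at hγN
      rw [hγN, one_mul] at h4
      exact h4
    have hkt : k * t = γ * M := by rw [ht]; field_simp
    have hMval : M = k * t * N := by
      have h5 : k * t = N⁻¹ * M := by rw [hkt, hγval]
      rw [h5]; field_simp
    have hδeq : δ = 4 * M * (M - (k * (t * N) - c * (h₀ + t * q))) := by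
      have h6 := (maxDelta_eq_iff hδ hMpos (k * (GJ ⬝ᵥ h₁) - c * ηh)).mp hM.symm
      rwa [hdot, hηh'] at h6
    have hquad : q * t ^ 2 + h₀ * t = δ / (4 * k * c * N) := by
      rw [hMval] at hδeq
      rw [eq_div_iff (by positivity : (4:ℝ) * k * c * N ≠ 0)]
      linear_combination -hδeq
    have htc1 : t = c1 := huniq t htpos hquad
    refine ⟨?_, ?_, ?_, hGh, ?_, ?_⟩
    · rw [hθt, htc1, hc1def]
    · rw [hGJ', htc1, hc1def]
    · rw [hηJ, Jfun, hcan, ← hGJ, hGJ', hθt, htc1, smul_dotProduct, dotProduct_smul,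
        smul_eq_mul, smul_eq_mul, dotProduct_comm (H⁻¹ *ᵥ h₁) h₁, hqd]
      have hgoal : 1 / 2 * (c1 * (c1 * q)) = h₀ ^ 2 / (8 * q) *
          (-(Real.sign h₀) + sval n k c δ h₀ H h₁) ^ 2 := by
        rw [hc1def, c1val, ← hqdef]
        have habs : |h₀| ^ 2 = h₀ ^ 2 := sq_abs h₀
        field_simp
        linear_combination
          (8 * (-(Real.sign h₀) + sval n k c δ h₀ H h₁) ^ 2) * habs
      linarith
    · rw [hηh', htc1, hηh_rhs]
    · exact hγval
  · rintro ⟨hθt, hGJ, hηJ, hGh, hηh, hγ⟩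
    have hGh' := hGh.symm
    subst hGh'
    subst hθt hGJ hηh hγ hηJ
    have hdot2 : (c1 • h₁) ⬝ᵥ h₁ = c1 * N := by
      rw [smul_dotProduct, smul_eq_mul, hNdef]
    have hGJeq : c1 • h₁ = H *ᵥ (c1 • (H⁻¹ *ᵥ h₁)) := by
      rw [mulVec_smul, mulVec_mulVec, hHHinv, one_mulVec]
    refine ⟨inv_pos.mpr hN, ?_, ?_, ?_, rfl, ?_, ?_⟩
    · have hmpos : 0 < k * c1 * N := by positivity
      have hMeq : maxDelta δ (k * ((c1 • h₁) ⬝ᵥ h₁) -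
          c * (|h₀| / 2 * (Real.sign h₀ + sval n k c δ h₀ H h₁))) = k * c1 * N := by
        rw [hdot2, hηh_rhs]
        rw [maxDelta_eq_iff hδ hmpos]
        have h7 : δ = 4 * k * c * N * (q * c1 ^ 2 + h₀ * c1) := by
          rw [hc1quad]; field_simp
        linear_combination h7
      rw [hMeq, smul_smul]
      congr 1
      field_simp
    · exact hGJeq
    · rw [Jfun, hcan, ← hGJeq, smul_dotProduct, dotProduct_smul, smul_eq_mul,
        smul_eq_mul, dotProduct_comm (H⁻¹ *ᵥ h₁) h₁, hqd]
      have hgoal : 1 / 2 * (c1 * (c1 * q)) = h₀ ^ 2 / (8 * q) *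
          (-(Real.sign h₀) + sval n k c δ h₀ H h₁) ^ 2 := by
        rw [hc1def, c1val, ← hqdef]
        have habs : |h₀| ^ 2 = h₀ ^ 2 := sq_abs h₀
        field_simp
        linear_combination
          (8 * (-(Real.sign h₀) + sval n k c δ h₀ H h₁) ^ 2) * habs
      linarith
    · rw [hfun, hcan, dotProduct_smul, smul_eq_mul, hqd, hηh_rhs]
    · rw [← hNdef]
      exact inv_mul_cancel₀ hN.ne'
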